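/- arXiv:1902.03194 — 2 statements merged into one kernel-verified Lean document; each statement's English description precedes it below -/
import Mathlib

section
/- Let h ∈ O_X^p and M ⊆ O_X^p a submodule. If h_D belongs to the integral closure of M_D at a point (x, x') ∈ X × X, then h belongs to the integral closure of M at both x and x'. -/
/- Framework: a complex analytic space `X ⊆ ℂⁿ` is modelled as a set in `Fin n → ℂ`;
`O_X` is modelled by the ring of (germs of) functions `↥X → ℂ`, `O_X^p` by `↥X → Fin p → ℂ`,
and `O_{X×X}^{2p}` by `↥(X ×ˢ X) → (Fin p → ℂ) × (Fin p → ℂ)`.  Integral closure of a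
module at a point is formalized by the analytic curve criterion. -/

open Filter Topology

namespace LipDouble

/-- First projection `π₁ : X × X → X`. -/
def pr1 {E : Type*} {X : Set E} (q : ↥(X ×ˢ X)) : ↥X := ⟨q.val.1, q.prop.1⟩

/-- Second projection `π₂ : X × X → X`. -/
def pr2 {E : Type*} {X : Set E} (q : ↥(X ×ˢ X)) : ↥X := ⟨q.val.2, q.prop.2⟩

/-- The double of an element `h ∈ O_X^p`: `h_D = (h ∘ π₁, h ∘ π₂) ∈ O_{X×X}^{2p}`. -/
def dbl {E V : Type*} {X : Set E} (h : ↥X → V) : ↥(X ×ˢ X) → V × V :=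
  fun q => (h (pr1 q), h (pr2 q))

/-- The double `M_D` of a submodule `M ⊆ O_X^p`: the `O_{X×X}`-submodule of
`O_{X×X}^{2p}` generated by the doubles `h_D`, `h ∈ M`. -/
def Double {E V : Type*} {X : Set E} [AddCommGroup V] [Module ℂ V]
    (M : Submodule (↥X → ℂ) (↥X → V)) :
    Submodule (↥(X ×ˢ X) → ℂ) (↥(X ×ˢ X) → V × V) :=
  Submodule.span _ (dbl '' (M : Set (↥X → V)))

/-- Curve criterion for integral closure of modules: `h ∈ M̄` at the point `x`,
i.e. for every analytic curve `φ : (ℂ,0) → (S,x)`, `h ∘ φ ∈ (φ*M)·O_{ℂ,0}`. -/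
def MemIC {E V : Type*} [NormedAddCommGroup E] [NormedSpace ℂ E]
    [AddCommGroup V] [Module ℂ V] {S : Set E}
    (M : Submodule (↥S → ℂ) (↥S → V)) (h : ↥S → V) (x : ↥S) : Prop :=
  ∀ φ : ℂ → ↥S, AnalyticAt ℂ (fun t => (φ t : E)) 0 → φ 0 = x →
    ∃ (r : ℕ) (a : Fin r → ℂ → ℂ) (g : Fin r → (↥S → V)),
      (∀ i, AnalyticAt ℂ (a i) 0) ∧ (∀ i, g i ∈ M) ∧
      ∀ᶠ t in 𝓝 (0 : ℂ), h (φ t) = ∑ i, a i t • g i (φ t)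

/-- Membership in (the stalk of) `M` at the point `q`, i.e. at germ level. -/
def MemAt {α R V : Type*} [TopologicalSpace α] [Semiring R]
    [AddCommMonoid V] [Module R V]
    (M : Submodule (α → R) (α → V)) (h : α → V) (q : α) : Prop :=
  ∃ h' ∈ M, h =ᶠ[𝓝 q] h'

/-- The rank of (a matrix of generators of) `M` at the point `x`. -/
noncomputable def rankAt {α V : Type*} [AddCommGroup V] [Module ℂ V]
    (M : Submodule (α → ℂ) (α → V)) (x : α) : ℕ :=
  Module.finrank ℂ (Submodule.span ℂ ((fun h : α → V => h x) '' (M : Set (α → V))))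

/-- `M` has generic rank `k`: the rank is everywhere `≤ k` and equals `k` on a
dense open (generic) subset. -/
def HasGenericRank {E V : Type*} [TopologicalSpace E] [AddCommGroup V] [Module ℂ V]
    {X : Set E} (M : Submodule (↥X → ℂ) (↥X → V)) (k : ℕ) : Prop :=
  (∀ x, rankAt M x ≤ k) ∧ ∃ U : Set ↥X, IsOpen U ∧ Dense U ∧ ∀ x ∈ U, rankAt M x = k

end LipDouble

open LipDouble

lemma slice_mem {E V : Type*} {X : Set E} [AddCommGroup V] [Module ℂ V]
    (M : Submodule (↥X → ℂ) (↥X → V)) (j : ↥X → ↥(X ×ˢ X))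
    (P : (V × V) →ₗ[ℂ] V)
    (hP : ∀ m : ↥X → V, ∀ x, P (dbl m (j x)) = m x)
    {g : ↥(X ×ˢ X) → V × V} (hg : g ∈ Double M) :
    (fun x => P (g (j x))) ∈ M := by
  induction hg using Submodule.span_induction with
  | mem f hf =>
    obtain ⟨m, hm, rfl⟩ := hf
    have he : (fun x => P (dbl m (j x))) = m := funext fun x => hP m x
    rwa [he]
  | zero =>
    have he : (fun x => P ((0 : ↥(X ×ˢ X) → V × V) (j x))) = (0 : ↥X → V) := by funext x; simp
    rw [he]; exact M.zero_mem
  | add f₁ f₂ _ _ h₁ h₂ =>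
    have he : (fun x => P ((f₁ + f₂) (j x))) =
        (fun x => P (f₁ (j x))) + fun x => P (f₂ (j x)) := by
      funext x; simp
    rw [he]; exact M.add_mem h₁ h₂
  | smul c f _ hf =>
    have he : (fun x => P ((c • f) (j x))) =
        (fun x => c (j x)) • fun x => P (f (j x)) := by
      funext x; simp [Pi.smul_apply]
    rw [he]; exact M.smul_mem _ hf

/-- Proposition 2.8(1): if `h_D ∈ overline{M_D}` at `(x,x')` then
`h ∈ M̄` at `x` and at `x'`. -/
theorem mem_closure_of_double {n p : ℕ} (X : Set (Fin n → ℂ))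
    (M : Submodule (↥X → ℂ) (↥X → Fin p → ℂ))
    (h : ↥X → Fin p → ℂ) (q : ↥(X ×ˢ X))
    (hD : MemIC (Double M) (dbl h) q) :
    MemIC M h (pr1 q) ∧ MemIC M h (pr2 q) := by
  constructor
  · intro φ hφ hφ0
    set ψ : ℂ → ↥(X ×ˢ X) := fun t =>
      ⟨((φ t : Fin n → ℂ), (q : (Fin n → ℂ) × (Fin n → ℂ)).2), ⟨(φ t).prop, q.prop.2⟩⟩ with hψ
    have hψana : AnalyticAt ℂ (fun t => (ψ t : (Fin n → ℂ) × (Fin n → ℂ))) 0 :=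
      hφ.prod analyticAt_const
    have hψ0 : ψ 0 = q := by
      apply Subtype.ext
      have h1 : (φ 0 : Fin n → ℂ) = (q : (Fin n → ℂ) × (Fin n → ℂ)).1 := by
        rw [hφ0]; rfl
      exact Prod.ext h1 rfl
    obtain ⟨r, a, g, ha, hgmem, hev⟩ := hD ψ hψana hψ0
    refine ⟨r, a, fun i => fun x => (g i ⟨((x : Fin n → ℂ),
      (q : (Fin n → ℂ) × (Fin n → ℂ)).2), ⟨x.prop, q.prop.2⟩⟩).1, ha, ?_, ?_⟩
    · intro i
      exact slice_mem M
        (fun x => ⟨((x : Fin n → ℂ), (q : (Fin n → ℂ) × (Fin n → ℂ)).2), ⟨x.prop, q.prop.2⟩⟩)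
        (LinearMap.fst ℂ _ _) (fun m x => rfl) (hgmem i)
    · filter_upwards [hev] with t ht
      have h2 := congrArg Prod.fst ht
      simpa [dbl, pr1, Prod.fst_sum] using h2
  · intro φ hφ hφ0
    set ψ : ℂ → ↥(X ×ˢ X) := fun t =>
      ⟨((q : (Fin n → ℂ) × (Fin n → ℂ)).1, (φ t : Fin n → ℂ)), ⟨q.prop.1, (φ t).prop⟩⟩ with hψ
    have hψana : AnalyticAt ℂ (fun t => (ψ t : (Fin n → ℂ) × (Fin n → ℂ))) 0 :=
      analyticAt_const.prod hφ
    have hψ0 : ψ 0 = q := by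
      apply Subtype.ext
      have h2 : (φ 0 : Fin n → ℂ) = (q : (Fin n → ℂ) × (Fin n → ℂ)).2 := by
        rw [hφ0]; rfl
      exact Prod.ext rfl h2
    obtain ⟨r, a, g, ha, hgmem, hev⟩ := hD ψ hψana hψ0
    refine ⟨r, a, fun i => fun x => (g i ⟨((q : (Fin n → ℂ) × (Fin n → ℂ)).1,
      (x : Fin n → ℂ)), ⟨q.prop.1, x.prop⟩⟩).2, ha, ?_, ?_⟩
    · intro i
      exact slice_mem M
        (fun x => ⟨((q : (Fin n → ℂ) × (Fin n → ℂ)).1, (x : Fin n → ℂ)), ⟨q.prop.1, x.prop⟩⟩)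
        (LinearMap.snd ℂ _ _) (fun m x => rfl) (hgmem i)
    · filter_upwards [hev] with t ht
      have h2 := congrArg Prod.snd ht
      simpa [dbl, pr2, Prod.snd_sum] using h2
end

section
/- Let M, N ⊆ O_X^p be submodules. If M_D ⊆ overline{N_D} at a diagonal point (x,x), then M ⊆ N̄ at x. -/
/- Framework: a complex analytic space `X ⊆ ℂⁿ` is modelled as a set in `Fin n → ℂ`;
`O_X` is modelled by the ring of (germs of) functions `↥X → ℂ`, `O_X^p` by `↥X → Fin p → ℂ`,
and `O_{X×X}^{2p}` by `↥(X ×ˢ X) → (Fin p → ℂ) × (Fin p → ℂ)`.  Integral closure of a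
module at a point is formalized by the analytic curve criterion. -/

open Filter Topology

open LipDouble

/-- Corollary 2.9(1): if `M_D ⊆ overline{N_D}` at a diagonal point
`(x,x)` then `M ⊆ N̄` at `x`. -/
theorem subset_closure_of_double {n p : ℕ} (X : Set (Fin n → ℂ))
    (M N : Submodule (↥X → ℂ) (↥X → Fin p → ℂ))
    (q : ↥(X ×ˢ X)) (hdiag : q.val.1 = q.val.2)
    (hD : ∀ H ∈ Double M, MemIC (Double N) H q) :
    ∀ h ∈ M, MemIC N h (pr1 q) := by
  intro h hM φ hφ hφ0
  have hmem : ∀ x : ↥X, ((x : Fin n → ℂ), (x : Fin n → ℂ)) ∈ X ×ˢ X :=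
    fun x => ⟨x.2, x.2⟩
  set dg : ↥X → ↥(X ×ˢ X) := fun x => ⟨(x, x), hmem x⟩ with hdg
  have hpr1 : ∀ x : ↥X, pr1 (dg x) = x := fun x => Subtype.ext rfl
  set ψ : ℂ → ↥(X ×ˢ X) := fun t => dg (φ t) with hψdef
  have hψan : AnalyticAt ℂ (fun t => (ψ t : (Fin n → ℂ) × (Fin n → ℂ))) 0 := hφ.prod hφ
  have hψ0 : ψ 0 = q := by
    apply Subtype.ext
    have h1 : (φ 0 : Fin n → ℂ) = q.val.1 := by rw [hφ0]; rfl
    show ((φ 0 : Fin n → ℂ), (φ 0 : Fin n → ℂ)) = q.val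
    rw [h1]
    exact Prod.ext rfl hdiag
  obtain ⟨r, a, G, ha, hG, hev⟩ :=
    hD (dbl h) (Submodule.subset_span ⟨h, hM, rfl⟩) ψ hψan hψ0
  have hdecomp : ∀ i : Fin r, ∃ (m : ℕ) (c : Fin m → (↥(X ×ˢ X) → ℂ))
      (g : Fin m → (↥X → Fin p → ℂ)), (∀ j, g j ∈ N) ∧
      (∑ j, c j • dbl (g j)) = G i := by
    intro i
    obtain ⟨w, hws, hwsum⟩ := Submodule.mem_span_set.mp (hG i)
    choose g0 hg0N hg0 using fun x : ↥w.support => hws x.2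
    refine ⟨w.support.card, fun j => w (w.support.equivFin.symm j : _),
      fun j => g0 (w.support.equivFin.symm j), fun j => hg0N _, ?_⟩
    rw [Equiv.sum_comp w.support.equivFin.symm
      (fun x : ↥w.support => w (x : _) • dbl (g0 x))]
    have : ∀ x : ↥w.support, w (x : _) • dbl (g0 x) = w (x : _) • (x : _) := by
      intro x; rw [hg0 x]
    rw [Finset.sum_congr rfl fun x _ => this x, Finset.sum_coe_sort w.support
      (fun y => w y • y), ← hwsum]
    rfl
  choose m c g hgN hrep using hdecomp
  let e : Fin (Fintype.card (Σ i : Fin r, Fin (m i))) ≃ (Σ i : Fin r, Fin (m i)) :=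
    (Fintype.equivFin _).symm
  refine ⟨_, fun k => a (e k).1,
    fun k x => c (e k).1 (e k).2 (dg x) • g (e k).1 (e k).2 x, fun k => ha (e k).1,
    fun k => ?_, ?_⟩
  · exact N.smul_mem (fun x => c (e k).1 (e k).2 (dg x)) (hgN (e k).1 (e k).2)
  · filter_upwards [hev] with t ht
    have h1 : h (φ t) = (dbl h (ψ t)).1 := by
      show h (φ t) = h (pr1 (ψ t))
      rw [hpr1 (φ t)]
    rw [h1, ht]
    have h2 : ∀ i, (G i (ψ t)).1 = ∑ j, c i j (ψ t) • g i j (φ t) := by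
      intro i
      rw [← hrep i]
      have hfs : (∑ j, c i j • dbl (g i j)) (ψ t)
          = ∑ j, c i j (ψ t) • dbl (g i j) (ψ t) := by
        simp [Finset.sum_apply]
      rw [hfs, Prod.fst_sum]
      refine Finset.sum_congr rfl fun j _ => ?_
      show (c i j (ψ t) • dbl (g i j) (ψ t)).1 = _
      rw [Prod.smul_fst]
      show c i j (ψ t) • g i j (pr1 (ψ t)) = _
      rw [hpr1 (φ t)]
    calc (∑ i, a i t • G i (ψ t)).1
        = ∑ i, a i t • (G i (ψ t)).1 := by
          rw [Prod.fst_sum]; exact Finset.sum_congr rfl fun i _ => Prod.smul_fst _ _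
      _ = ∑ i, ∑ j, a i t • (c i j (ψ t) • g i j (φ t)) := by
          refine Finset.sum_congr rfl fun i _ => ?_
          rw [h2 i, Finset.smul_sum]
      _ = ∑ σ : (Σ i : Fin r, Fin (m i)),
            a σ.1 t • (c σ.1 σ.2 (ψ t) • g σ.1 σ.2 (φ t)) := by
          rw [← Finset.univ_sigma_univ, Finset.sum_sigma]
      _ = ∑ k, a (e k).1 t •
            (fun x => c (e k).1 (e k).2 (dg x) • g (e k).1 (e k).2 x) (φ t) := by
          rw [← Equiv.sum_comp e (fun σ : (Σ i : Fin r, Fin (m i)) =>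
            a σ.1 t • (c σ.1 σ.2 (ψ t) • g σ.1 σ.2 (φ t)))]
end
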